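/- arXiv:2502.12906 — 5 statements merged into one kernel-verified Lean document; each statement's English description precedes it below -/
import Mathlib

section
/- Let H be a flag-no-square simple graph with vertex set V, let Y be any set, and let α : Y → V be any map. Define the thickened graph Γ_α on vertex set Y by declaring distinct y, y' ∈ Y adjacent if and only if α(y) = α(y') or α(y) is adjacent to α(y') in H. Then Γ_α is flag-no-square: for any four distinct vertices y₁, y₂, y₃, y₄ of Γ_α with y₁ adjacent to y₂, y₂ to y₃, y₃ to y₄, and y₄ to y₁, either y₁ is adjacent to y₃ or y₂ is adjacent to y₄. -/
/-- A simple graph is *flag-no-square* if for any four distinct vertices `v₁ v₂ v₃ v₄`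
forming a 4-cycle (`v₁ ~ v₂ ~ v₃ ~ v₄ ~ v₁`), one of the diagonals is present.
(The distinctness conditions `v₁ ≠ v₂`, `v₂ ≠ v₃`, `v₃ ≠ v₄`, `v₄ ≠ v₁` are automatic
from adjacency in a simple graph.) -/
def FlagNoSquare {V : Type*} (G : SimpleGraph V) : Prop :=
  ∀ v₁ v₂ v₃ v₄ : V, v₁ ≠ v₃ → v₂ ≠ v₄ →
    G.Adj v₁ v₂ → G.Adj v₂ v₃ → G.Adj v₃ v₄ → G.Adj v₄ v₁ →
    G.Adj v₁ v₃ ∨ G.Adj v₂ v₄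

/-- The thickened graph `Γ_α` on vertex set `Y` associated to a map `α : Y → V` and a graph
`H` on `V`: distinct `y, y'` are adjacent iff `α y = α y'` or `α y` is adjacent to `α y'`
in `H`. -/
def thickening {V Y : Type*} (H : SimpleGraph V) (α : Y → V) : SimpleGraph Y where
  Adj y y' := y ≠ y' ∧ (α y = α y' ∨ H.Adj (α y) (α y'))
  symm := by
    constructor
    rintro y y' ⟨h₁, h₂⟩
    refine ⟨h₁.symm, ?_⟩
    rcases h₂ with h | h
    · exact Or.inl h.symm
    · exact Or.inr h.symm
  loopless := by constructor; rintro y ⟨h₁, -⟩; exact h₁ rfl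

/-! A 4-cycle of `Γ_α` either has an edge collapsed by `α`, and then a diagonal is present
because vertices with the same image have the same neighbours, or it maps onto a 4-cycle of `H`,
whose diagonal lifts unless that diagonal is itself collapsed, which also gives an edge of `Γ_α`.
-/

section Thickening

variable {V Y : Type*} {H : SimpleGraph V} {α : Y → V} {y y' z : Y}

theorem thickening_adj_of_adj_of_map_eq (hmap : α y = α y') (hne : y ≠ z)
    (h : (thickening H α).Adj y' z) : (thickening H α).Adj y z :=
  ⟨hne, hmap ▸ h.2⟩

theorem map_adj_of_thickening_adj (h : (thickening H α).Adj y y') (hmap : α y ≠ α y') :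
    H.Adj (α y) (α y') :=
  h.2.resolve_left hmap

end Thickening

/-- If `H` is a flag-no-square simple graph, `Y` is any set and
`α : Y → V` is any map, then the thickened graph `Γ_α` is flag-no-square. -/
theorem thickening_flagNoSquare {V Y : Type*} (H : SimpleGraph V) (hH : FlagNoSquare H)
    (α : Y → V) : FlagNoSquare (thickening H α) := by
  intro y₁ y₂ y₃ y₄ h13 h24 a12 a23 a34 a41
  by_cases hcollapse : α y₁ = α y₂ ∨ α y₂ = α y₃ ∨ α y₃ = α y₄ ∨ α y₄ = α y₁
  · rcases hcollapse with h | h | h | h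
    · exact .inl (thickening_adj_of_adj_of_map_eq h h13 a23)
    · exact .inr (thickening_adj_of_adj_of_map_eq h h24 a34)
    · exact .inl (thickening_adj_of_adj_of_map_eq h h13.symm a41).symm
    · exact .inr (thickening_adj_of_adj_of_map_eq h h24.symm a12).symm
  simp only [not_or] at hcollapse
  obtain ⟨n12, n23, n34, n41⟩ := hcollapse
  by_cases d13 : α y₁ = α y₃
  · exact .inl ⟨h13, .inl d13⟩
  by_cases d24 : α y₂ = α y₄
  · exact .inr ⟨h24, .inl d24⟩
  exact (hH _ _ _ _ d13 d24 (map_adj_of_thickening_adj a12 n12) (map_adj_of_thickening_adj a23 n23)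
    (map_adj_of_thickening_adj a34 n34) (map_adj_of_thickening_adj a41 n41)).imp
    (⟨h13, .inr ·⟩) (⟨h24, .inr ·⟩)
end

section
/- For every m ∈ M and every ε ∈ ℤ/2ℤ, the set of 'undetected' vertices N_ε = {v ∈ V : for every w with (v,w) ∈ P, (m + 𝒮)(v,w) ≠ ε} is a clique of H; that is, any two distinct vertices v, v' ∈ N_ε are adjacent in H (equivalently, (v,v') ∉ P). -/
/-- The vertex set of the thickened graph `𝕋(H)`: ordered pairs of distinct, non-adjacent
vertices of `H` (pairs at "cubical distance ≥ 2", where cubes are modeled by cliques of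
`H`). -/
def statePairs {V : Type*} (H : SimpleGraph V) : Set (V × V) :=
  {p | p.1 ≠ p.2 ∧ ¬ H.Adj p.1 p.2}

/-- The initial state `𝒮`: with respect to a fixed linear order on `V`, the pair `(v, w)`
is assigned `1` iff `v < w`. -/
def initialState {V : Type*} [LinearOrder V] (H : SimpleGraph V) :
    statePairs H → ZMod 2 :=
  fun p => if p.1.1 < p.1.2 then 1 else 0

open Classical in
/-- The move `m_{vw}`: the state taking the value `1` exactly at the vertices `(v, w)` and
`(w, v)` and `0` elsewhere. -/
noncomputable def move {V : Type*} (H : SimpleGraph V) (v w : V) :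
    statePairs H → ZMod 2 :=
  fun p => if p.1 = (v, w) ∨ p.1 = (w, v) then 1 else 0

/-- The subgroup `M` of the group of states (under pointwise addition) generated by all
the moves `m_{vw}` for `(v, w) ∈ P`. -/
noncomputable def moveGroup {V : Type*} (H : SimpleGraph V) :
    AddSubgroup (statePairs H → ZMod 2) :=
  AddSubgroup.closure {f | ∃ v w : V, (v, w) ∈ statePairs H ∧ f = move H v w}

/-! Every element of `M` is symmetric under `(v, w) ↦ (w, v)`, while `𝒮` takes
different values at `(v, v')` and `(v', v)`. So if `v, v'` are distinct and non-adjacent, `m + 𝒮`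
takes both values of `ℤ/2ℤ` on the pairs `(v, v')`, `(v', v)`, one of which is `ε`. -/

namespace statePairs

variable {V : Type*} {H : SimpleGraph V}

lemma swap_mem {p : V × V} (hp : p ∈ statePairs H) : p.swap ∈ statePairs H :=
  ⟨hp.1.symm, fun h => hp.2 h.symm⟩

def swap (p : statePairs H) : statePairs H := ⟨p.1.swap, swap_mem p.2⟩

end statePairs

section Symmetric

open statePairs

variable {V : Type*} (H : SimpleGraph V)

def symmetricStates (G : Type*) [AddGroup G] : AddSubgroup (statePairs H → G) where
  carrier := {f | ∀ p, f (swap p) = f p}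
  add_mem' hf hg p := by simp only [Pi.add_apply, hf p, hg p]
  zero_mem' _ := rfl
  neg_mem' hf p := by simp only [Pi.neg_apply, hf p]

lemma move_swap (v w : V) (p : statePairs H) : move H v w (swap p) = move H v w p := by
  obtain ⟨⟨a, b⟩, _⟩ := p
  simp only [move, swap, Prod.swap_prod_mk]
  congr 1
  simp only [Prod.mk.injEq]
  exact propext (by tauto)

lemma moveGroup_le_symmetricStates : moveGroup H ≤ symmetricStates H (ZMod 2) :=
  AddSubgroup.closure_le _ |>.mpr fun _ ⟨v, w, _, hf⟩ => hf ▸ move_swap H v w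

lemma initialState_swap [LinearOrder V] (p : statePairs H) :
    initialState H (swap p) = initialState H p + 1 := by
  obtain ⟨⟨a, b⟩, hab, _⟩ := p
  simp only [initialState, swap, Prod.swap_prod_mk]
  rcases hab.lt_or_gt with h | h
  · simp [h, h.not_gt]
    decide
  · simp [h, h.not_gt]

end Symmetric

lemma ZMod.two_eq_or_add_one_eq (a ε : ZMod 2) : a = ε ∨ a + 1 = ε := by
  revert a ε
  decide

theorem undetected_is_clique_general {V : Type*} [LinearOrder V] (H : SimpleGraph V)
    (m : statePairs H → ZMod 2) (hm : m ∈ moveGroup H) (ε : ZMod 2)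
    (v v' : V) (hne : v ≠ v')
    (hv : ∀ w : V, ∀ h : (v, w) ∈ statePairs H,
      (m + initialState H) ⟨(v, w), h⟩ ≠ ε)
    (hv' : ∀ w : V, ∀ h : (v', w) ∈ statePairs H,
      (m + initialState H) ⟨(v', w), h⟩ ≠ ε) :
    H.Adj v v' := by
  by_contra hadj
  set p : statePairs H := ⟨(v, v'), hne, hadj⟩
  have hswap : (m + initialState H) (statePairs.swap p) = (m + initialState H) p + 1 := by
    have hsymm : m (statePairs.swap p) = m p := moveGroup_le_symmetricStates H hm p
    rw [Pi.add_apply, Pi.add_apply, hsymm, initialState_swap, add_assoc]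
  rcases ZMod.two_eq_or_add_one_eq ((m + initialState H) p) ε with h | h
  · exact hv v' p.2 h
  · exact hv' v (statePairs.swap p).2 (hswap ▸ h)

/-- For every `m ∈ M` and every `ε ∈ ℤ/2ℤ`, the set of "undetected"
vertices `N_ε = {v : ∀ w with (v,w) ∈ P, (m + 𝒮)(v,w) ≠ ε}` is a clique of `H`: any two
distinct vertices of `N_ε` are adjacent in `H`. -/
theorem undetected_is_clique {V : Type*} [Fintype V] [LinearOrder V] (H : SimpleGraph V)
    (m : statePairs H → ZMod 2) (hm : m ∈ moveGroup H) (ε : ZMod 2)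
    (v v' : V) (hne : v ≠ v')
    (hv : ∀ w : V, ∀ h : (v, w) ∈ statePairs H,
      (m + initialState H) ⟨(v, w), h⟩ ≠ ε)
    (hv' : ∀ w : V, ∀ h : (v', w) ∈ statePairs H,
      (m + initialState H) ⟨(v', w), h⟩ ≠ ε) :
    H.Adj v v' :=
  undetected_is_clique_general H m hm ε v v' hne hv hv'
end

section
/- Let G be a flag-no-square simple graph. Let σ be a nonempty finite clique of G, and let τ be a nonempty finite clique of G such that every vertex of τ lies outside σ and is adjacent in G to at least one vertex of σ. Then there exists a vertex w ∈ σ that is adjacent in G to every vertex of τ. -/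
/-- Let `G` be a flag-no-square simple graph, `σ` a nonempty finite
clique of `G`, and `τ` a nonempty finite clique of `G` every vertex of which lies outside
`σ` and is adjacent to at least one vertex of `σ`. Then some vertex `w ∈ σ` is adjacent
to every vertex of `τ`. -/
theorem exists_vertex_adjacent_to_clique {V : Type*} (G : SimpleGraph V)
    (hG : FlagNoSquare G) (σ τ : Finset V)
    (hσne : σ.Nonempty) (hσ : G.IsClique (σ : Set V))
    (hτne : τ.Nonempty) (hτ : G.IsClique (τ : Set V))
    (hout : ∀ v ∈ τ, v ∉ σ) (hadj : ∀ v ∈ τ, ∃ u ∈ σ, G.Adj v u) :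
    ∃ w ∈ σ, ∀ v ∈ τ, G.Adj w v := by
  classical
  clear hτne
  induction τ using Finset.induction_on with
  | empty =>
    obtain ⟨w, hw⟩ := hσne
    exact ⟨w, hw, by simp⟩
  | @insert a s ha ih =>
    have haτ : a ∈ insert a s := Finset.mem_insert_self a s
    obtain ⟨u, huσ, hau⟩ := hadj a haτ
    have hsτ : ∀ v ∈ s, v ∈ insert a s := fun v hv => Finset.mem_insert_of_mem hv
    obtain ⟨w, hwσ, hw⟩ := ih
      (hτ.subset (by intro x hx; simpa using Finset.mem_insert_of_mem (by simpa using hx)))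
      (fun v hv => hout v (hsτ v hv)) (fun v hv => hadj v (hsτ v hv))
    by_cases hwa : G.Adj w a
    · refine ⟨w, hwσ, fun v hv => ?_⟩
      rcases Finset.mem_insert.mp hv with rfl | hv
      · exact hwa
      · exact hw v hv
    · -- use u instead
      have huw : u ≠ w := by rintro rfl; exact hwa hau.symm
      have huwadj : G.Adj u w := hσ huσ hwσ huw
      refine ⟨u, huσ, fun v hv => ?_⟩
      rcases Finset.mem_insert.mp hv with rfl | hv
      · exact hau.symm
      · -- square: w - v - a - u - w
        have hwa' : w ≠ a := fun h => hout a haτ (h ▸ hwσ)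
        have hvu : v ≠ u := fun h => hout v (hsτ v hv) (h ▸ huσ)
        have hva : G.Adj v a := hτ (by simpa using hsτ v hv) (by simp)
          (fun h => ha (h ▸ hv))
        rcases hG w v a u hwa' hvu (hw v hv) hva hau huwadj with h | h
        · exact absurd h hwa
        · exact h.symm
end

section
/- Let G be a flag-no-square simple graph and σ a finite clique of G. Let v, v' be vertices not in σ, and set τ = N(v) ∩ σ and τ' = N(v') ∩ σ, where N denotes the neighborhood in G. If τ and τ' are distinct with the same (finite) cardinality, then v and v' are not adjacent in G. -/
/-- Let `G` be a flag-no-square simple graph and `σ` a finite clique of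
`G`. Let `v, v'` be vertices not in `σ`, and let `τ = N(v) ∩ σ` and `τ' = N(v') ∩ σ` be
their neighborhoods in `σ`. If `τ` and `τ'` are distinct with the same (finite)
cardinality, then `v` and `v'` are not adjacent in `G`. -/
theorem not_adjacent_of_distinct_closest_faces {V : Type*} (G : SimpleGraph V)
    (hG : FlagNoSquare G) (σ : Finset V) (hσ : G.IsClique (σ : Set V))
    (v v' : V) (hv : v ∉ σ) (hv' : v' ∉ σ)
    (hne : (σ : Set V) ∩ G.neighborSet v ≠ (σ : Set V) ∩ G.neighborSet v')
    (hcard : ((σ : Set V) ∩ G.neighborSet v).ncard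
      = ((σ : Set V) ∩ G.neighborSet v').ncard) :
    ¬ G.Adj v v' := by
  intro hadj
  set τ : Set V := (σ : Set V) ∩ G.neighborSet v with hτ
  set τ' : Set V := (σ : Set V) ∩ G.neighborSet v' with hτ'
  have hfin : τ.Finite := σ.finite_toSet.subset Set.inter_subset_left
  have hfin' : τ'.Finite := σ.finite_toSet.subset Set.inter_subset_left
  -- there is w ∈ τ \ τ'
  have hsub : ¬ τ ⊆ τ' := by
    intro hsub
    exact hne (Set.eq_of_subset_of_ncard_le hsub hcard.ge hfin')
  have hsub' : ¬ τ' ⊆ τ := by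
    intro hsub'
    exact hne (Set.eq_of_subset_of_ncard_le hsub' hcard.le hfin).symm
  obtain ⟨w, hwτ, hwτ'⟩ := Set.not_subset.mp hsub
  obtain ⟨w', hw'τ', hw'τ⟩ := Set.not_subset.mp hsub'
  obtain ⟨hwσ, hwv⟩ := hwτ
  obtain ⟨hw'σ, hw'v'⟩ := hw'τ'
  have hww' : w ≠ w' := by rintro rfl; exact hw'τ ⟨hwσ, hwv⟩
  have hadjww' : G.Adj w w' := hσ hwσ hw'σ hww'
  have h1 : v ≠ w' := by rintro rfl; exact hv hw'σ
  have h2 : w ≠ v' := by rintro rfl; exact hv' hwσ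
  rcases hG v w w' v' h1 h2 (by exact hwv) hadjww' (G.adj_symm (by exact hw'v')) (G.adj_symm hadj)
    with h | h
  · exact hw'τ ⟨hw'σ, h⟩
  · exact hwτ' ⟨hwσ, G.adj_symm h⟩
end

section
/- Let G be a flag-no-square simple graph and σ a finite clique of G. Let τ be a nonempty subset of σ, and let v be a vertex not in σ with N(v) ∩ σ = τ, where N denotes the neighborhood in G. Suppose w is a vertex not in σ that is adjacent to v and adjacent to at least one vertex of σ ∖ τ. Then w is adjacent to every vertex of τ. -/
/-- Let `G` be a flag-no-square simple graph and `σ` a finite clique of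
`G`. Let `τ` be a nonempty subset of `σ`, and `v ∉ σ` a vertex with `N(v) ∩ σ = τ`.
If `w ∉ σ` is adjacent to `v` and adjacent to at least one vertex of `σ \ τ`, then `w` is
adjacent to every vertex of `τ`. -/
theorem adjacent_to_face_of_adjacent {V : Type*} (G : SimpleGraph V)
    (hG : FlagNoSquare G) (σ : Finset V) (hσ : G.IsClique (σ : Set V))
    (τ : Set V) (hτσ : τ ⊆ (σ : Set V)) (hτne : τ.Nonempty)
    (v : V) (hv : v ∉ σ) (hNv : (σ : Set V) ∩ G.neighborSet v = τ)
    (w : V) (hw : w ∉ σ) (hwv : G.Adj w v)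
    (hwσ : ∃ u ∈ (σ : Set V) \ τ, G.Adj w u) :
    ∀ u ∈ τ, G.Adj w u := by
  intro u hu
  obtain ⟨u', ⟨hu'σ, hu'τ⟩, hwu'⟩ := hwσ
  have huσ : u ∈ (σ : Set V) := hτσ hu
  have hvu : G.Adj v u := by
    have : u ∈ (σ : Set V) ∩ G.neighborSet v := hNv ▸ hu
    exact this.2
  have hvu' : ¬ G.Adj v u' := fun h =>
    hu'τ (hNv ▸ (⟨hu'σ, h⟩ : u' ∈ (σ : Set V) ∩ G.neighborSet v))
  have huu' : G.Adj u u' := hσ huσ hu'σ (fun h => hu'τ (h ▸ hu))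
  have hne1 : v ≠ u' := fun h => hv (h ▸ hu'σ)
  have hne2 : u ≠ w := fun h => hw (h ▸ huσ)
  rcases hG v u u' w hne1 hne2 hvu huu' hwu'.symm hwv with h | h
  · exact absurd h hvu'
  · exact h.symm
end
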